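/- arXiv:2304.04929 — 5 statements merged into one kernel-verified Lean document; each statement's English description precedes it below -/
import Mathlib

section
/- For every integer n ≥ 1, every tuple of entire functions f_0, …, f_n : ℂ → ℂ with no common zero, every ε > 0 and every N > 0, there exist polynomials p_0, p_1, …, p_n ∈ ℂ[z] such that: (i) for every z with |z| ≤ N, the vector (p_0(z),…,p_n(z)) is nonzero and d_FS((p_0(z),…,p_n(z)), (f_0(z),…,f_n(z))) < ε; and (ii) deg p_0 > deg p_j for every j ∈ {1,…,n}. -/
/-!
Approximate each `fᵢ` uniformly on the disc by a Taylor polynomial, then add a tiny multiple of a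
high power of `z` to `p₀` so that its degree dominates. Since `(f₀(z), …, fₙ(z))` is bounded away
from `0` on the compact disc and `d_FS(a, b) ≤ 2 (n + 1) ‖a - b‖ / ‖a‖`, uniform closeness of the
coordinate vectors gives closeness in the Fubini–Study distance.
-/

/-- The Hermitian norm of a vector in `ℂ^m`. -/
noncomputable def hermNorm {m : ℕ} (a : Fin m → ℂ) : ℝ :=
  Real.sqrt (∑ i, ‖a i‖ ^ 2)

/-- The Fubini–Study (chordal) distance between two points of `ℂP^{m-1}` given by
nonzero homogeneous-coordinate vectors in `ℂ^m`. -/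
noncomputable def dFS {m : ℕ} (a b : Fin m → ℂ) : ℝ :=
  Real.sqrt (∑ i, ∑ j, if i < j then ‖a i * b j - a j * b i‖ ^ 2 else 0)
    / (hermNorm a * hermNorm b)

open Polynomial Metric

section Projective

variable {m : ℕ}

lemma hermNorm_eq_norm (a : Fin m → ℂ) : hermNorm a = ‖WithLp.toLp 2 a‖ := by
  simp [hermNorm, EuclideanSpace.norm_eq]

lemma hermNorm_nonneg (a : Fin m → ℂ) : 0 ≤ hermNorm a :=
  Real.sqrt_nonneg _

lemma norm_le_hermNorm (a : Fin m → ℂ) (i : Fin m) : ‖a i‖ ≤ hermNorm a := by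
  rw [hermNorm_eq_norm]
  exact PiLp.norm_apply_le (WithLp.toLp 2 a) i

lemma hermNorm_le_sum_norm (a : Fin m → ℂ) : hermNorm a ≤ ∑ i, ‖a i‖ :=
  Real.sqrt_le_iff.2
    ⟨by positivity, Finset.sum_sq_le_sq_sum_of_nonneg fun _ _ => norm_nonneg _⟩

lemma hermNorm_sub_hermNorm_le (a b : Fin m → ℂ) :
    hermNorm b - hermNorm a ≤ hermNorm (a - b) := by
  simpa only [hermNorm_eq_norm, WithLp.toLp_sub, norm_sub_rev] using
    norm_sub_norm_le (WithLp.toLp 2 b) (WithLp.toLp 2 a)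

lemma hermNorm_pos_iff {a : Fin m → ℂ} : 0 < hermNorm a ↔ ∃ i, a i ≠ 0 := by
  simp [hermNorm_eq_norm, Function.ne_iff]

lemma continuous_hermNorm : Continuous (hermNorm : (Fin m → ℂ) → ℝ) := by
  unfold hermNorm
  fun_prop

lemma dFS_le (a b : Fin m → ℂ) : dFS a b ≤ 2 * m * hermNorm (a - b) / hermNorm a := by
  rcases (hermNorm_nonneg b).eq_or_lt with hb | hb
  · simp only [dFS, ← hb, mul_zero, div_zero]
    exact div_nonneg (mul_nonneg (by positivity) (hermNorm_nonneg _)) (hermNorm_nonneg a)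
  have hterm : ∀ i j, ‖a i * b j - a j * b i‖ ≤ 2 * (hermNorm (a - b) * hermNorm b) := by
    intro i j
    -- the minors of `(a, b)` are those of `(a - b, b)`
    calc ‖a i * b j - a j * b i‖ = ‖(a - b) i * b j - (a - b) j * b i‖ := by
          simp only [Pi.sub_apply]; ring_nf
      _ ≤ ‖(a - b) i‖ * ‖b j‖ + ‖(a - b) j‖ * ‖b i‖ := by
          grw [norm_sub_le, norm_mul, norm_mul]
      _ ≤ hermNorm (a - b) * hermNorm b + hermNorm (a - b) * hermNorm b := by
          gcongr <;> first | apply norm_le_hermNorm | apply hermNorm_nonneg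
      _ = _ := by ring
  have hsum : Real.sqrt (∑ i, ∑ j, if i < j then ‖a i * b j - a j * b i‖ ^ 2 else 0)
      ≤ 2 * m * hermNorm (a - b) * hermNorm b := by
    refine Real.sqrt_le_iff.2 ⟨by have := hermNorm_nonneg (a - b); positivity, ?_⟩
    calc (∑ i, ∑ j, if i < j then ‖a i * b j - a j * b i‖ ^ 2 else 0)
        ≤ ∑ _i : Fin m, ∑ _j : Fin m, (2 * (hermNorm (a - b) * hermNorm b)) ^ 2 := by
          gcongr with i _ j _
          split_ifs
          · gcongr; exact hterm i j
          · positivity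
      _ = _ := by
          simp only [Finset.sum_const, Finset.card_univ, Fintype.card_fin, nsmul_eq_mul]; ring
  calc dFS a b ≤ 2 * m * hermNorm (a - b) * hermNorm b / (hermNorm a * hermNorm b) :=
        div_le_div_of_nonneg_right hsum (mul_nonneg (hermNorm_nonneg a) hb.le)
    _ = _ := mul_div_mul_right _ _ hb.ne'

lemma half_hermNorm_le_of_hermNorm_sub_le {a b : Fin m → ℂ} {t : ℝ} (ht : t ≤ 1 / 2)
    (h : hermNorm (a - b) ≤ t * hermNorm b) : hermNorm b / 2 ≤ hermNorm a := by
  nlinarith [hermNorm_sub_hermNorm_le a b, hermNorm_nonneg b]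

lemma dFS_le_of_hermNorm_sub_le {a b : Fin m → ℂ} {t : ℝ} (ht : t ≤ 1 / 2)
    (hb : 0 < hermNorm b) (h : hermNorm (a - b) ≤ t * hermNorm b) : dFS a b ≤ 4 * m * t := by
  have ha := half_hermNorm_le_of_hermNorm_sub_le ht h
  calc dFS a b ≤ 2 * m * hermNorm (a - b) / hermNorm a := dFS_le a b
    _ ≤ 2 * m * (t * hermNorm b) / (hermNorm b / 2) := by
        have := hermNorm_nonneg (a - b)
        gcongr
        exact mul_nonneg (by positivity) (h.trans' this)
    _ = 4 * m * t := by field_simp; ring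

end Projective

noncomputable def FormalMultilinearSeries.partialSumPolynomial {𝕜 : Type*}
    [NontriviallyNormedField 𝕜] (p : FormalMultilinearSeries 𝕜 𝕜 𝕜) (k : ℕ) : 𝕜[X] :=
  ∑ i ∈ Finset.range k, C (p.coeff i) * X ^ i

lemma FormalMultilinearSeries.eval_partialSumPolynomial {𝕜 : Type*} [NontriviallyNormedField 𝕜]
    (p : FormalMultilinearSeries 𝕜 𝕜 𝕜) (k : ℕ) (z : 𝕜) :
    (p.partialSumPolynomial k).eval z = p.partialSum k z := by
  simp only [partialSumPolynomial, partialSum, eval_finsetSum, eval_mul, eval_C, eval_pow, eval_X,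
    apply_eq_pow_smul_coeff, smul_eq_mul, mul_comm]

lemma Differentiable.exists_polynomial_norm_sub_lt {f : ℂ → ℂ} (hf : Differentiable ℂ f)
    {K : Set ℂ} (hK : IsCompact K) {δ : ℝ} (hδ : 0 < δ) :
    ∃ q : ℂ[X], ∀ z ∈ K, ‖q.eval z - f z‖ < δ := by
  have hunif := (tendstoLocallyUniformlyOn_iff_tendstoUniformlyOn_of_compact hK).1 <|
    (hf.hasFPowerSeriesOnBall 0 one_pos).tendstoLocallyUniformlyOn'.mono
      fun z _ => edist_lt_top z 0
  obtain ⟨k, hk⟩ := (Metric.tendstoUniformlyOn_iff.1 hunif δ hδ).exists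
  refine ⟨(cauchyPowerSeries f 0 1).partialSumPolynomial k, fun z hz => ?_⟩
  rw [← dist_eq_norm, dist_comm, FormalMultilinearSeries.eval_partialSumPolynomial]
  simpa using hk z hz

lemma Polynomial.exists_degree_gt_norm_sub_lt (q : ℂ[X]) (d : ℕ) {K : Set ℂ} (hK : IsCompact K)
    {δ : ℝ} (hδ : 0 < δ) :
    ∃ r : ℂ[X], (d : WithBot ℕ) < r.degree ∧ ∀ z ∈ K, ‖r.eval z - q.eval z‖ < δ := by
  set D := max d q.natDegree + 1
  obtain ⟨M, hM⟩ := hK.exists_bound_of_continuousOn (continuous_pow D).continuousOn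
  set η : ℝ := δ / (|M| + 1)
  have hη : 0 < η := by positivity
  refine ⟨q + C (η : ℂ) * X ^ D, ?_, fun z hz => ?_⟩
  · have hη' : (η : ℂ) ≠ 0 := by exact_mod_cast hη.ne'
    rw [degree_add_eq_right_of_degree_lt] <;> rw [degree_C_mul_X_pow _ hη']
    · exact_mod_cast Nat.lt_succ_of_le (le_max_left _ _)
    · exact degree_lt_iff_coeff_zero _ _ |>.2 fun i hi => coeff_eq_zero_of_natDegree_lt (by omega)
  · calc ‖(q + C (η : ℂ) * X ^ D).eval z - q.eval z‖ = η * ‖z ^ D‖ := by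
          simp [Complex.norm_real, abs_of_pos hη]
      _ ≤ η * |M| := by gcongr; exact (hM z hz).trans (le_abs_self M)
      _ < δ := by
          rw [div_mul_eq_mul_div, div_lt_iff₀ (by positivity)]
          nlinarith [abs_nonneg M]

lemma exists_polynomial_approx_degree_lt {n : ℕ} {f : Fin (n + 1) → ℂ → ℂ}
    (hf : ∀ i, Differentiable ℂ (f i)) {K : Set ℂ} (hK : IsCompact K) {δ : ℝ} (hδ : 0 < δ) :
    ∃ p : Fin (n + 1) → ℂ[X], (∀ z ∈ K, ∀ i, ‖(p i).eval z - f i z‖ < δ) ∧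
      ∀ j, j ≠ 0 → (p j).degree < (p 0).degree := by
  choose q hq using fun i => (hf i).exists_polynomial_norm_sub_lt hK (half_pos hδ)
  obtain ⟨r, hr_deg, hr⟩ := (q 0).exists_degree_gt_norm_sub_lt
    (Finset.univ.sup fun i => (q i).natDegree) hK (half_pos hδ)
  refine ⟨Function.update q 0 r, fun z hz i => ?_, fun j hj => ?_⟩
  · rcases eq_or_ne i 0 with rfl | hi
    · rw [Function.update_self]
      linarith [norm_sub_le_norm_sub_add_norm_sub (r.eval z) ((q 0).eval z) (f 0 z), hr z hz,
        hq 0 z hz]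
    · rw [Function.update_of_ne hi]
      linarith [hq i z hz]
  · rw [Function.update_self, Function.update_of_ne hj]
    refine degree_le_natDegree.trans_lt (lt_of_le_of_lt ?_ hr_deg)
    exact_mod_cast Finset.le_sup (f := fun i => (q i).natDegree) (Finset.mem_univ j)

theorem stmt2_general (n : ℕ) (f : Fin (n + 1) → ℂ → ℂ)
    (hf : ∀ i, Differentiable ℂ (f i)) (hnc : ∀ z : ℂ, ∃ i, f i z ≠ 0)
    (ε N : ℝ) (hε : 0 < ε) :
    ∃ p : Fin (n + 1) → Polynomial ℂ,
      (∀ z : ℂ, ‖z‖ ≤ N →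
        (∃ i, (p i).eval z ≠ 0) ∧
        dFS (fun i => (p i).eval z) (fun i => f i z) < ε) ∧
      (∀ j : Fin (n + 1), j ≠ 0 → (p j).degree < (p 0).degree) := by
  obtain ⟨c, hc, hcK⟩ := (isCompact_closedBall (0 : ℂ) N).exists_forall_le'
    (continuous_hermNorm.comp (continuous_pi fun i => (hf i).continuous)).continuousOn
    fun z _ => hermNorm_pos_iff.2 (hnc z)
  set t : ℝ := min (1 / 2) (ε / (8 * (n + 1)))
  have ht : 0 < t := by positivity
  obtain ⟨p, hp, hdeg⟩ := exists_polynomial_approx_degree_lt hf (isCompact_closedBall 0 N)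
    (δ := t * c / (n + 1)) (by positivity)
  refine ⟨p, fun z hz => ?_, hdeg⟩
  have hzK : z ∈ closedBall 0 N := mem_closedBall_zero_iff.2 hz
  have hb : c ≤ hermNorm fun i => f i z := hcK z hzK
  have hsub : hermNorm ((fun i => (p i).eval z) - fun i => f i z) ≤ t * hermNorm fun i => f i z :=
    calc _ ≤ ∑ i, ‖(p i).eval z - f i z‖ := hermNorm_le_sum_norm _
      _ ≤ ∑ _i : Fin (n + 1), t * c / (n + 1) := Finset.sum_le_sum fun i _ => (hp z hzK i).le
      _ = t * c := by
          simp only [Finset.sum_const, Finset.card_univ, Fintype.card_fin, nsmul_eq_mul,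
            Nat.cast_add, Nat.cast_one]
          field_simp
      _ ≤ _ := by gcongr
  refine ⟨hermNorm_pos_iff.1 ?_, ?_⟩
  · have := half_hermNorm_le_of_hermNorm_sub_le (min_le_left _ _) hsub
    linarith
  · calc _ ≤ 4 * ((n + 1 : ℕ) : ℝ) * t :=
          dFS_le_of_hermNorm_sub_le (min_le_left _ _) (hc.trans_le hb) hsub
      _ ≤ 4 * (n + 1) * (ε / (8 * (n + 1))) := by push_cast; gcongr; exact min_le_right _ _
      _ < ε := by field_simp; linarith

/-- Runge-type approximation for entire curves. Any entire curve
`[f₀ : ⋯ : fₙ] : ℂ → ℂP^n` can be approximated on `{|z| ≤ N}`, in the Fubini–Study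
distance, by a rational curve `[p₀ : ⋯ : pₙ]` with `deg p₀ > deg p_j` for all `j ≠ 0`. -/
theorem stmt2 (n : ℕ) (hn : 1 ≤ n) (f : Fin (n + 1) → ℂ → ℂ)
    (hf : ∀ i, Differentiable ℂ (f i)) (hnc : ∀ z : ℂ, ∃ i, f i z ≠ 0)
    (ε N : ℝ) (hε : 0 < ε) (hN : 0 < N) :
    ∃ p : Fin (n + 1) → Polynomial ℂ,
      (∀ z : ℂ, ‖z‖ ≤ N →
        (∃ i, (p i).eval z ≠ 0) ∧
        dFS (fun i => (p i).eval z) (fun i => f i z) < ε) ∧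
      (∀ j : Fin (n + 1), j ≠ 0 → (p j).degree < (p 0).degree) :=
  stmt2_general n f hf hnc ε N hε
end

section
/- Let (g_k)_{k≥1} be functions ℂ → ℂ, (R_k)_{k≥1} positive reals, and (a_k)_{k≥1} complex numbers. Assume: (i) for every k ≥ 1 and every z with |z| > R_k, |g_k(z)| ≤ 2^{−k}·R_k/|z|; and (ii) for every k ≥ 2, |a_k| − |a_{k−1}| − R_k − R_{k−1} > (R_1 + ⋯ + R_{k−1})·(k−1)·2^k. Then for every z ∈ ℂ satisfying |z − a_k| > R_k for all k ≥ 1, the series Σ_{k≥1} g_k(z − a_k) converges absolutely and |Σ_{k≥1} g_k(z − a_k)| < 1. -/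
/-!
Each term is strictly dominated by a geometric one: for `‖w‖ > R k` the decay bound gives
`‖g k w‖ ≤ 2⁻ᵏ R k / ‖w‖ < 2⁻ᵏ`, and `∑_{k ≥ 1} 2⁻ᵏ = 1`.
-/

lemma lt_of_le_mul_div_of_lt {x c r t : ℝ} (hc : 0 < c) (hr : 0 < r) (hrt : r < t)
    (hx : x ≤ c * r / t) : x < c := by
  calc x ≤ c * r / t := hx
    _ < c := by
      rw [div_lt_iff₀ (hr.trans hrt)]
      exact mul_lt_mul_of_pos_left hrt hc

lemma hasSum_half_pow_succ : HasSum (fun k : ℕ => (1 / 2 : ℝ) ^ (k + 1)) 1 := by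
  convert hasSum_geometric_two' 1 using 1
  ext k
  rw [pow_succ, one_div_pow]
  ring

lemma summable_norm_and_norm_tsum_lt_one {E : Type*} [SeminormedAddCommGroup E] {f : ℕ → E}
    (hf : ∀ k, ‖f k‖ < (1 / 2 : ℝ) ^ (k + 1)) :
    Summable (fun k => ‖f k‖) ∧ ‖∑' k, f k‖ < 1 := by
  have hsum : Summable (fun k => ‖f k‖) :=
    hasSum_half_pow_succ.summable.of_nonneg_of_le (fun k => norm_nonneg _) (fun k => (hf k).le)
  refine ⟨hsum, ?_⟩
  calc ‖∑' k, f k‖ ≤ ∑' k, ‖f k‖ := norm_tsum_le_tsum_norm hsum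
    _ < ∑' k : ℕ, (1 / 2 : ℝ) ^ (k + 1) :=
      hsum.tsum_lt_tsum (fun k => (hf k).le) (hf 0) hasSum_half_pow_succ.summable
    _ = 1 := hasSum_half_pow_succ.tsum_eq

theorem stmt7_general (g : ℕ → ℂ → ℂ) (R : ℕ → ℝ) (a : ℕ → ℂ)
    (hR : ∀ k, 1 ≤ k → 0 < R k)
    (hdecay : ∀ k, 1 ≤ k → ∀ z : ℂ, R k < ‖z‖ →
      ‖g k z‖ ≤ (1 / 2) ^ k * R k / ‖z‖) :
    ∀ z : ℂ, (∀ k, 1 ≤ k → R k < ‖z - a k‖) →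
      Summable (fun k : ℕ => ‖g (k + 1) (z - a (k + 1))‖) ∧
      ‖∑' k : ℕ, g (k + 1) (z - a (k + 1))‖ < 1 := by
  intro z hz
  apply summable_norm_and_norm_tsum_lt_one
  intro k
  have hk : 1 ≤ k + 1 := Nat.le_add_left 1 k
  exact lt_of_le_mul_div_of_lt (by positivity) (hR _ hk) (hz _ hk)
    (hdecay _ hk _ (hz _ hk))

/-- decay of each `g k` beyond radius `R k` plus separation of the centers
`a k` implies that, outside all the discs, the series `Σ g k (z - a k)` converges
absolutely and has modulus < 1. -/
theorem stmt7 (g : ℕ → ℂ → ℂ) (R : ℕ → ℝ) (a : ℕ → ℂ)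
    (hR : ∀ k, 1 ≤ k → 0 < R k)
    (hdecay : ∀ k, 1 ≤ k → ∀ z : ℂ, R k < ‖z‖ →
      ‖g k z‖ ≤ (1 / 2) ^ k * R k / ‖z‖)
    (hsep : ∀ k : ℕ, 2 ≤ k →
      (∑ l ∈ Finset.Icc 1 (k - 1), R l) * ((k : ℝ) - 1) * 2 ^ k
        < ‖a k‖ - ‖a (k - 1)‖ - R k - R (k - 1)) :
    ∀ z : ℂ, (∀ k, 1 ≤ k → R k < ‖z - a k‖) →
      Summable (fun k : ℕ => ‖g (k + 1) (z - a (k + 1))‖) ∧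
      ‖∑' k : ℕ, g (k + 1) (z - a (k + 1))‖ < 1 :=
  stmt7_general g R a hR hdecay
end

section
/- Let (g_k)_{k≥1} be functions ℂ → ℂ, (R_k)_{k≥1} positive reals, and (a_k)_{k≥1} complex numbers. Assume: (i) for every k ≥ 1 and every z with |z| > R_k, |g_k(z)| ≤ 2^{−k}·R_k/|z|; and (ii) for every k ≥ 2, |a_k| − |a_{k−1}| − R_k − R_{k−1} > (R_1 + ⋯ + R_{k−1})·(k−1)·2^k. Then for every k ≥ 1 and every z in the closed disc {z : |z − a_k| ≤ R_k}, the series ε_k(z) := Σ_{ℓ≥1, ℓ≠k} g_ℓ(z − a_ℓ) converges absolutely and |ε_k(z)| < 2^{−k+1}. -/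
/-!
Seen from a point `z` of the `k`-th disc, every other `g l` is evaluated outside its own disc,
because the centres are far apart. For `l > k` the decay hypothesis then gives
`‖g l (z - a l)‖ ≤ 2^{-l}`, and these terms add up to `2^{-k}`. For `l < k` the separation
makes `‖z - a l‖` at least `A_k = (R_1 + ⋯ + R_{k-1}) (k - 1) 2^k`, so these terms add up to at
most `(R_1 + ⋯ + R_{k-1}) / (2 A_k) ≤ 2^{-k-1}`.
-/

open Finset

theorem add_add_lt_sub_of_forall_lt_sub {d R A : ℕ → ℝ} {m : ℕ}
    (hR : ∀ j, m < j → 0 ≤ R j) (hA : ∀ j, m < j → 0 ≤ A j)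
    (hstep : ∀ j, m < j → A j < d j - d (j - 1) - R j - R (j - 1)) :
    ∀ n, m < n → R m + R n + A n < d n - d m := by
  intro n hmn
  induction n, hmn using Nat.le_induction with
  | base =>
    have h := hstep (m + 1) (by omega)
    rw [Nat.add_sub_cancel] at h
    linarith
  | succ n hmn ih =>
    have h := hstep (n + 1) (by omega)
    rw [Nat.add_sub_cancel] at h
    linarith [hR n hmn, hA n hmn]

theorem abs_norm_sub_norm_sub_le_norm_sub {E : Type*} [SeminormedAddCommGroup E] {x y z : E}
    {r : ℝ} (hz : ‖z - y‖ ≤ r) : |‖x‖ - ‖y‖| - r ≤ ‖z - x‖ := by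
  have h := norm_sub_le_norm_sub_add_norm_sub x z y
  rw [norm_sub_rev x z] at h
  linarith [abs_norm_sub_norm_le x y]

theorem summable_and_tsum_le_of_tail_le_geometric {f : ℕ → ℝ} {k : ℕ} (hf : ∀ l, 0 ≤ f l)
    (htail : ∀ l, k < l → f l ≤ (1 / 2) ^ l) :
    Summable f ∧ ∑' l, f l ≤ ∑ l ∈ range (k + 1), f l + (1 / 2) ^ k := by
  have hgeom : ∀ n, f (n + (k + 1)) ≤ (1 / 2) ^ k / 2 / 2 ^ n := fun n =>
    calc f (n + (k + 1)) ≤ (1 / 2) ^ (n + (k + 1)) := htail _ (by omega)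
      _ = (1 / 2) ^ k / 2 / 2 ^ n := by
        rw [pow_add, pow_succ, one_div_pow, one_div_pow]; field_simp
  have htail_sum : Summable fun n => f (n + (k + 1)) :=
    (summable_geometric_two' _).of_nonneg_of_le (fun n => hf _) hgeom
  have hsum := (summable_nat_add_iff (k + 1)).mp htail_sum
  refine ⟨hsum, ?_⟩
  rw [← hsum.sum_add_tsum_nat_add (k + 1)]
  gcongr
  calc ∑' n, f (n + (k + 1)) ≤ ∑' n : ℕ, (1 / 2 : ℝ) ^ k / 2 / 2 ^ n :=
        htail_sum.tsum_le_tsum hgeom (summable_geometric_two' _)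
    _ = (1 / 2) ^ k := tsum_geometric_two' _

theorem div_two_mul_mul_sub_one_mul_pow_le (S : ℝ) {k : ℕ} (hk : 1 ≤ k) :
    S / (2 * (S * ((k : ℝ) - 1) * 2 ^ k)) ≤ (1 / 2) ^ (k + 1) := by
  rcases eq_or_ne S 0 with rfl | hS
  · simp
  obtain rfl | hk := hk.eq_or_lt
  · norm_num -- at `k = 1` the denominator vanishes, so the left side is `0`
  have hc : (1 : ℝ) ≤ k - 1 := by
    have : (2 : ℝ) ≤ k := by exact_mod_cast hk
    linarith
  calc S / (2 * (S * ((k : ℝ) - 1) * 2 ^ k)) = 1 / (2 * 2 ^ k * ((k : ℝ) - 1)) := by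
        field_simp
    _ ≤ 1 / (2 * 2 ^ k * 1) := by gcongr
    _ = (1 / 2) ^ (k + 1) := by rw [mul_one, ← pow_succ', one_div_pow]

def separationGap (R : ℕ → ℝ) (k : ℕ) : ℝ :=
  (∑ l ∈ Icc 1 (k - 1), R l) * ((k : ℝ) - 1) * 2 ^ k

/-- The norms of the terms of the series `ε_k(z)`, extended by zero to all of `ℕ`. -/
noncomputable def errorTerms (g : ℕ → ℂ → ℂ) (a : ℕ → ℂ) (k : ℕ) (z : ℂ) : ℕ → ℝ :=
  Set.indicator {l | 1 ≤ l ∧ l ≠ k} fun l => ‖g l (z - a l)‖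

section Separated

variable {g : ℕ → ℂ → ℂ} {R : ℕ → ℝ} {a : ℕ → ℂ}

theorem separationGap_pos (hR : ∀ k, 1 ≤ k → 0 < R k) {k : ℕ} (hk : 2 ≤ k) :
    0 < separationGap R k := by
  have hS : 0 < ∑ l ∈ Icc 1 (k - 1), R l :=
    sum_pos (fun l hl => hR l (mem_Icc.mp hl).1) ⟨1, mem_Icc.mpr ⟨le_rfl, by omega⟩⟩
  have hk' : (0 : ℝ) < k - 1 := by
    have : (2 : ℝ) ≤ k := by exact_mod_cast hk
    linarith
  unfold separationGap
  positivity

theorem add_add_separationGap_lt (hR : ∀ k, 1 ≤ k → 0 < R k)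
    (hsep : ∀ k, 2 ≤ k → separationGap R k < ‖a k‖ - ‖a (k - 1)‖ - R k - R (k - 1))
    {m n : ℕ} (hm : 1 ≤ m) (hmn : m < n) :
    R m + R n + separationGap R n < ‖a n‖ - ‖a m‖ :=
  add_add_lt_sub_of_forall_lt_sub (fun j hj => (hR j (by omega)).le)
    (fun j hj => (separationGap_pos hR (by omega)).le) (fun j hj => hsep j (by omega)) n hmn

theorem norm_g_le_of_lt (hR : ∀ k, 1 ≤ k → 0 < R k)
    (hdecay : ∀ k, 1 ≤ k → ∀ z : ℂ, R k < ‖z‖ → ‖g k z‖ ≤ (1 / 2) ^ k * R k / ‖z‖)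
    (hsep : ∀ k, 2 ≤ k → separationGap R k < ‖a k‖ - ‖a (k - 1)‖ - R k - R (k - 1))
    {k l : ℕ} {z : ℂ} (hz : ‖z - a k‖ ≤ R k) (hl : 1 ≤ l) (hlk : l < k) :
    ‖g l (z - a l)‖ ≤ R l / (2 * separationGap R k) := by
  have hfar : R l + separationGap R k < ‖z - a l‖ := by
    have := abs_norm_sub_norm_sub_le_norm_sub (x := a l) hz
    have := add_add_separationGap_lt hR hsep hl hlk
    linarith [neg_abs_le (‖a l‖ - ‖a k‖)]
  have hRl := hR l hl
  have hG := separationGap_pos hR (k := k) (by omega)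
  calc ‖g l (z - a l)‖ ≤ (1 / 2) ^ l * R l / ‖z - a l‖ := hdecay l hl _ (by linarith)
    _ ≤ (1 / 2) ^ 1 * R l / separationGap R k := by
        gcongr ?_ * _ / ?_
        · exact pow_le_pow_of_le_one (by norm_num) (by norm_num) hl
        · linarith
    _ = R l / (2 * separationGap R k) := by ring

theorem norm_g_le_of_gt (hR : ∀ k, 1 ≤ k → 0 < R k)
    (hdecay : ∀ k, 1 ≤ k → ∀ z : ℂ, R k < ‖z‖ → ‖g k z‖ ≤ (1 / 2) ^ k * R k / ‖z‖)
    (hsep : ∀ k, 2 ≤ k → separationGap R k < ‖a k‖ - ‖a (k - 1)‖ - R k - R (k - 1))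
    {k l : ℕ} {z : ℂ} (hk : 1 ≤ k) (hz : ‖z - a k‖ ≤ R k) (hkl : k < l) :
    ‖g l (z - a l)‖ ≤ (1 / 2) ^ l := by
  have hfar : R l < ‖z - a l‖ := by
    have := abs_norm_sub_norm_sub_le_norm_sub (x := a l) hz
    have := add_add_separationGap_lt hR hsep hk hkl
    linarith [le_abs_self (‖a l‖ - ‖a k‖), separationGap_pos hR (k := l) (by omega)]
  calc ‖g l (z - a l)‖ ≤ (1 / 2) ^ l * R l / ‖z - a l‖ := hdecay l (by omega) _ hfar
    _ ≤ (1 / 2) ^ l := by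
        rw [mul_div_assoc]
        exact mul_le_of_le_one_right (by positivity)
          ((div_le_one (by linarith [hR l (by omega)])).mpr hfar.le)

theorem errorTerms_le_of_gt (hR : ∀ k, 1 ≤ k → 0 < R k)
    (hdecay : ∀ k, 1 ≤ k → ∀ z : ℂ, R k < ‖z‖ → ‖g k z‖ ≤ (1 / 2) ^ k * R k / ‖z‖)
    (hsep : ∀ k, 2 ≤ k → separationGap R k < ‖a k‖ - ‖a (k - 1)‖ - R k - R (k - 1))
    {k l : ℕ} {z : ℂ} (hk : 1 ≤ k) (hz : ‖z - a k‖ ≤ R k) (hkl : k < l) :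
    errorTerms g a k z l ≤ (1 / 2) ^ l := by
  rw [errorTerms, Set.indicator_of_mem (show l ∈ {l | 1 ≤ l ∧ l ≠ k} from ⟨by omega, by omega⟩)]
  exact norm_g_le_of_gt hR hdecay hsep hk hz hkl

theorem sum_range_errorTerms_le (hR : ∀ k, 1 ≤ k → 0 < R k)
    (hdecay : ∀ k, 1 ≤ k → ∀ z : ℂ, R k < ‖z‖ → ‖g k z‖ ≤ (1 / 2) ^ k * R k / ‖z‖)
    (hsep : ∀ k, 2 ≤ k → separationGap R k < ‖a k‖ - ‖a (k - 1)‖ - R k - R (k - 1))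
    {k : ℕ} {z : ℂ} (hk : 1 ≤ k) (hz : ‖z - a k‖ ≤ R k) :
    ∑ l ∈ range (k + 1), errorTerms g a k z l ≤ (1 / 2) ^ (k + 1) := by
  set b : ℕ → ℝ := fun l => R l / (2 * separationGap R k)
  calc ∑ l ∈ range (k + 1), errorTerms g a k z l
        ≤ ∑ l ∈ range (k + 1), (Icc 1 (k - 1) : Set ℕ).indicator b l := by
        refine sum_le_sum fun l hl => ?_
        rw [mem_range] at hl
        by_cases hlk : l ∈ Icc 1 (k - 1)
        · rw [mem_Icc] at hlk
          rw [Set.indicator_of_mem (by simpa using hlk), errorTerms,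
            Set.indicator_of_mem (show l ∈ {l | 1 ≤ l ∧ l ≠ k} from ⟨by omega, by omega⟩)]
          exact norm_g_le_of_lt hR hdecay hsep hz hlk.1 (by omega)
        · rw [mem_Icc] at hlk
          rw [Set.indicator_of_notMem (by simpa using hlk), errorTerms,
            Set.indicator_of_notMem (show l ∉ {l | 1 ≤ l ∧ l ≠ k} by simp; omega)]
    _ = (∑ l ∈ Icc 1 (k - 1), R l) / (2 * separationGap R k) := by
        rw [sum_indicator_subset _ fun l hl => by simp at hl ⊢; omega, sum_div]
    _ ≤ (1 / 2) ^ (k + 1) := div_two_mul_mul_sub_one_mul_pow_le _ hk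

end Separated

/-- under the decay and separation hypotheses, on each closed disc
`{|z - a k| ≤ R k}` the error series `ε_k(z) = Σ_{ℓ≥1, ℓ≠k} g ℓ (z - a ℓ)` converges
absolutely and satisfies `|ε_k(z)| < 2^{-k+1}`. -/
theorem stmt8 (g : ℕ → ℂ → ℂ) (R : ℕ → ℝ) (a : ℕ → ℂ)
    (hR : ∀ k, 1 ≤ k → 0 < R k)
    (hdecay : ∀ k, 1 ≤ k → ∀ z : ℂ, R k < ‖z‖ →
      ‖g k z‖ ≤ (1 / 2) ^ k * R k / ‖z‖)
    (hsep : ∀ k : ℕ, 2 ≤ k →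
      (∑ l ∈ Finset.Icc 1 (k - 1), R l) * ((k : ℝ) - 1) * 2 ^ k
        < ‖a k‖ - ‖a (k - 1)‖ - R k - R (k - 1)) :
    ∀ k : ℕ, 1 ≤ k → ∀ z : ℂ, ‖z - a k‖ ≤ R k →
      Summable (fun l : {l : ℕ // 1 ≤ l ∧ l ≠ k} =>
        ‖g l (z - a l)‖) ∧
      ‖∑' l : {l : ℕ // 1 ≤ l ∧ l ≠ k}, g l (z - a l)‖
        < 2 * (1 / 2) ^ k := by
  intro k hk z hz
  obtain ⟨hsum, htsum⟩ := summable_and_tsum_le_of_tail_le_geometric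
    (Set.indicator_nonneg fun _ _ => norm_nonneg _)
    fun l hkl => errorTerms_le_of_gt hR hdecay hsep hk hz hkl
  have hsum' : Summable fun l : {l : ℕ // 1 ≤ l ∧ l ≠ k} => ‖g l (z - a l)‖ :=
    summable_subtype_iff_indicator.mpr hsum
  refine ⟨hsum', ?_⟩
  calc ‖∑' l : {l : ℕ // 1 ≤ l ∧ l ≠ k}, g l (z - a l)‖
        ≤ ∑' l : {l : ℕ // 1 ≤ l ∧ l ≠ k}, ‖g l (z - a l)‖ := norm_tsum_le_tsum_norm hsum'
    _ = ∑' l, errorTerms g a k z l :=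
        _root_.tsum_subtype {l | 1 ≤ l ∧ l ≠ k} fun l => ‖g l (z - a l)‖
    _ ≤ (1 / 2) ^ (k + 1) + (1 / 2) ^ k :=
        htsum.trans (by gcongr; exact sum_range_errorTerms_le hR hdecay hsep hk hz)
    _ < 2 * (1 / 2) ^ k := by
        rw [pow_succ]
        linarith [pow_pos (one_half_pos (α := ℝ)) k]
end

section
/- Let (R_k)_{k≥1} be positive reals and (a_k)_{k≥1} complex numbers such that for every k ≥ 2, |a_k| − |a_{k−1}| − R_k − R_{k−1} > (R_1 + ⋯ + R_{k−1})·(k−1)·2^k. Then for all integers 1 ≤ ℓ < k and every z in the closed disc {z : |z − a_k| ≤ R_k}, one has |z − a_ℓ| > R_ℓ·(1 + (k−1)·2^k). Consequently, if moreover g_ℓ : ℂ → ℂ satisfies |g_ℓ(w)| ≤ 2^{−ℓ}·R_ℓ/|w| for all |w| > R_ℓ, then |g_ℓ(z − a_ℓ)| < 2^{−k}/(k−1) for all such z. -/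
/-!
Put `f m = ‖a m‖ + R m`. The growth condition at `k` says that `‖a k‖ - R k` exceeds `f (k - 1)`
by at least `(R 1 + ⋯ + R (k-1))·(k-1)·2^k`; in particular `f` is monotone, so for `ℓ < k` the
disc around `a k` lies beyond `f ℓ + R ℓ·(k-1)·2^k = ‖a ℓ‖ + R ℓ·(1 + (k-1)·2^k)`, and the
triangle inequality turns this into the lower bound on `‖z - a ℓ‖`. The decay of `g ℓ` then gives
`‖g ℓ (z - a ℓ)‖ < 2^{-ℓ} / (1 + (k-1)·2^k) < 2^{-k} / (k-1)`.
-/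

open Finset

section Separation

variable {E : Type*} [SeminormedAddCommGroup E] {R : ℕ → ℝ} {a : ℕ → E}

variable (R a) in
def SparseCenters : Prop :=
  ∀ k : ℕ, 2 ≤ k →
    (∑ l ∈ Icc 1 (k - 1), R l) * ((k : ℝ) - 1) * 2 ^ k < ‖a k‖ - ‖a (k - 1)‖ - R k - R (k - 1)

theorem SparseCenters.monotoneOn_norm_add (hsep : SparseCenters R a)
    (hR : ∀ k, 1 ≤ k → 0 ≤ R k) :
    MonotoneOn (fun m => ‖a m‖ + R m) (Set.Ici 1) := by
  refine monotoneOn_nat_Ici_of_le_succ fun n hn => ?_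
  have h := hsep (n + 1) (by omega)
  simp only [Nat.add_sub_cancel, Nat.cast_add_one, add_sub_cancel_right] at h
  have hS : 0 ≤ (∑ l ∈ Icc 1 n, R l) * (n : ℝ) * 2 ^ (n + 1) := by
    have : 0 ≤ ∑ l ∈ Icc 1 n, R l := sum_nonneg fun l hl => hR l (mem_Icc.mp hl).1
    positivity
  linarith [hR (n + 1) (by omega)]

theorem SparseCenters.norm_add_mul_lt_norm_sub (hsep : SparseCenters R a)
    (hR : ∀ k, 1 ≤ k → 0 ≤ R k) {l k : ℕ} (hl : 1 ≤ l) (hlk : l < k) :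
    ‖a l‖ + R l * (1 + ((k : ℝ) - 1) * 2 ^ k) < ‖a k‖ - R k := by
  obtain ⟨m, rfl⟩ : ∃ m, k = m + 1 := ⟨k - 1, by omega⟩
  have h := hsep (m + 1) (by omega)
  simp only [Nat.add_sub_cancel, Nat.cast_add_one, add_sub_cancel_right] at h ⊢
  have hmono : ‖a l‖ + R l ≤ ‖a m‖ + R m :=
    hsep.monotoneOn_norm_add hR (Set.mem_Ici.mpr hl) (Set.mem_Ici.mpr (by omega)) (by omega)
  have hRl : R l ≤ ∑ j ∈ Icc 1 m, R j :=
    single_le_sum (fun j hj => hR j (mem_Icc.mp hj).1) (mem_Icc.mpr ⟨hl, by omega⟩)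
  have hscale : R l * (m : ℝ) * 2 ^ (m + 1) ≤ (∑ j ∈ Icc 1 m, R j) * (m : ℝ) * 2 ^ (m + 1) := by
    gcongr
  linarith

theorem SparseCenters.mul_lt_norm_sub (hsep : SparseCenters R a)
    (hR : ∀ k, 1 ≤ k → 0 ≤ R k) {l k : ℕ} (hl : 1 ≤ l) (hlk : l < k) {z : E} (hz : ‖z - a k‖ ≤ R k) :
    R l * (1 + ((k : ℝ) - 1) * 2 ^ k) < ‖z - a l‖ := by
  have htri : ‖a k‖ ≤ ‖z - a k‖ + ‖z - a l‖ + ‖a l‖ := by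
    calc ‖a k‖ = ‖(z - a l) - (z - a k) + a l‖ := by congr 1; abel
      _ ≤ ‖(z - a l) - (z - a k)‖ + ‖a l‖ := norm_add_le _ _
      _ ≤ ‖z - a k‖ + ‖z - a l‖ + ‖a l‖ := by gcongr; linarith [norm_sub_le (z - a l) (z - a k)]
  linarith [hsep.norm_add_mul_lt_norm_sub hR hl hlk]

end Separation

theorem norm_lt_div_of_decay {E F : Type*} [SeminormedAddCommGroup E] [SeminormedAddCommGroup F]
    {g : E → F} {r ε c : ℝ} (hr : 0 < r) (hε : 0 < ε) (hc : 1 ≤ c)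
    (hg : ∀ w : E, r < ‖w‖ → ‖g w‖ ≤ ε * r / ‖w‖) {w : E} (hw : r * c < ‖w‖) :
    ‖g w‖ < ε / c := by
  have hw' : r < ‖w‖ := by nlinarith
  calc ‖g w‖ ≤ ε * r / ‖w‖ := hg w hw'
    _ < ε * r / (r * c) := by gcongr
    _ = ε / c := by field_simp

theorem div_one_add_mul_two_pow_lt {ε x : ℝ} (hε : ε ≤ 1) (hx : 0 < x) (k : ℕ) :
    ε / (1 + x * 2 ^ k) < (1 / 2) ^ k / x := by
  rw [div_pow, one_pow, div_div, div_lt_div_iff₀ (by positivity) (by positivity)]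
  have : 0 < (2 : ℝ) ^ k * x := by positivity
  nlinarith

/-- the disc-separation estimate. If the centers satisfy the growth
condition, then every point of the closed disc `{|z - a k| ≤ R k}` is at distance
greater than `R ℓ·(1 + (k-1)·2^k)` from `a ℓ` for all `1 ≤ ℓ < k`; consequently if
`g ℓ` decays beyond radius `R ℓ`, then `|g ℓ (z - a ℓ)| < 2^{-k}/(k-1)` there. -/
theorem stmt9 (R : ℕ → ℝ) (a : ℕ → ℂ)
    (hR : ∀ k, 1 ≤ k → 0 < R k)
    (hsep : ∀ k : ℕ, 2 ≤ k →
      (∑ l ∈ Finset.Icc 1 (k - 1), R l) * ((k : ℝ) - 1) * 2 ^ k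
        < ‖a k‖ - ‖a (k - 1)‖ - R k - R (k - 1)) :
    ∀ l k : ℕ, 1 ≤ l → l < k → ∀ z : ℂ, ‖z - a k‖ ≤ R k →
      R l * (1 + ((k : ℝ) - 1) * 2 ^ k) < ‖z - a l‖ ∧
      ∀ g : ℂ → ℂ,
        (∀ w : ℂ, R l < ‖w‖ →
          ‖g w‖ ≤ (1 / 2) ^ l * R l / ‖w‖) →
        ‖g (z - a l)‖ < (1 / 2) ^ k / ((k : ℝ) - 1) := by
  intro l k hl hlk z hz
  have hR' : ∀ k, 1 ≤ k → 0 ≤ R k := fun k hk => (hR k hk).le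
  have hfar := SparseCenters.mul_lt_norm_sub hsep hR' hl hlk hz
  refine ⟨hfar, fun g hg => ?_⟩
  have hk : (0 : ℝ) < (k : ℝ) - 1 := by
    rw [sub_pos, Nat.one_lt_cast]; omega
  calc ‖g (z - a l)‖ < (1 / 2) ^ l / (1 + ((k : ℝ) - 1) * 2 ^ k) :=
        norm_lt_div_of_decay (hR l hl) (by positivity)
          (le_add_of_nonneg_right (by positivity)) hg hfar
    _ < (1 / 2) ^ k / ((k : ℝ) - 1) :=
        div_one_add_mul_two_pow_lt (pow_le_one₀ (by norm_num) (by norm_num)) hk k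
end

section
/- Let (g_k)_{k≥1} be functions ℂ → ℂ, (R_k)_{k≥1} positive reals, and (a_k)_{k≥1} complex numbers. Assume: (i) for every k ≥ 1, g_k is holomorphic (complex differentiable) at every point z with |z| > R_k and satisfies |g_k(z)| ≤ 2^{−k}·R_k/|z| there; and (ii) for every k ≥ 2, |a_k| − |a_{k−1}| − R_k − R_{k−1} > (R_1 + ⋯ + R_{k−1})·(k−1)·2^k. Then the set Ω := ℂ \ ⋃_{k≥1} {z : |z − a_k| ≤ R_k} is open, and the function H(z) := Σ_{k≥1} g_k(z − a_k) (the series converging absolutely and locally uniformly on Ω) is holomorphic at every point of Ω. -/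
/-!
The separation hypothesis makes `‖a k‖ - R k` grow at least linearly, so the closed discs
`{|z - a k| ≤ R k}` form a locally finite family and `Ω`, the complement of their union, is
open. On `Ω` the decay hypothesis gives `|g k (z - a k)| ≤ 2⁻ᵏ`, so the series is dominated by a
geometric series: the Weierstrass M-test gives uniform convergence on `Ω`, and a locally uniform
limit of holomorphic functions is holomorphic.
-/

open Filter Metric

theorem tendsto_atTop_of_add_le_succ {u : ℕ → ℝ} {c : ℝ} (hc : 0 < c)
    (h : ∀ k, u k + c ≤ u (k + 1)) : Tendsto u atTop atTop := by
  have hlin : ∀ k : ℕ, u 0 + c * k ≤ u k := by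
    intro k
    induction k with
    | zero => simp
    | succ k ih => push_cast; linarith [h k]
  exact tendsto_atTop_mono hlin <|
    tendsto_atTop_add_const_left _ _ (tendsto_natCast_atTop_atTop.const_mul_atTop hc)

theorem locallyFinite_closedBall_of_tendsto {ι E : Type*} [SeminormedAddCommGroup E]
    {a : ι → E} {r : ι → ℝ} (h : Tendsto (fun i => ‖a i‖ - r i) cofinite atTop) :
    LocallyFinite fun i => closedBall (a i) (r i) := by
  intro z
  refine ⟨ball z 1, ball_mem_nhds z one_pos, ?_⟩
  refine (eventually_cofinite.1 (h.eventually_gt_atTop (‖z‖ + 1))).subset ?_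
  rintro i ⟨w, hwa, hwz⟩
  rw [mem_closedBall, dist_eq_norm] at hwa
  rw [mem_ball, dist_eq_norm] at hwz
  have htri : ‖a i‖ ≤ ‖w - a i‖ + ‖w - z‖ + ‖z‖ := by
    calc ‖a i‖ = ‖-(w - a i) + (w - z) + z‖ := by congr 1; abel
      _ ≤ ‖w - a i‖ + ‖w - z‖ + ‖z‖ := by
        grw [norm_add_le, norm_add_le, norm_neg]
  simp only [Set.mem_ofPred_eq, not_lt]
  linarith

theorem isOpen_setOf_forall_lt_norm_sub {ι E : Type*} [SeminormedAddCommGroup E]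
    {a : ι → E} {r : ι → ℝ} (h : Tendsto (fun i => ‖a i‖ - r i) cofinite atTop) :
    IsOpen {z : E | ∀ i, r i < ‖z - a i‖} := by
  have hcompl : {z : E | ∀ i, r i < ‖z - a i‖} = (⋃ i, closedBall (a i) (r i))ᶜ := by
    ext z
    simp [dist_eq_norm]
  rw [hcompl]
  exact ((locallyFinite_closedBall_of_tendsto h).isClosed_iUnion
    fun _ => isClosed_closedBall).isOpen_compl

theorem le_of_le_mul_div {t c r s : ℝ} (hc : 0 ≤ c) (hs : 0 ≤ s) (hrs : r ≤ s)
    (h : t ≤ c * r / s) : t ≤ c :=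
  h.trans <| by
    rw [mul_div_assoc]
    exact mul_le_of_le_one_right hc (div_le_one_of_le₀ hrs hs)

section Separated

variable {E : Type*} [SeminormedAddCommGroup E] {R : ℕ → ℝ} {a : ℕ → E}

theorem norm_sub_radius_add_le_succ (hR : ∀ k, 1 ≤ k → 0 < R k)
    (hsep : ∀ k : ℕ, 2 ≤ k →
      (∑ l ∈ Finset.Icc 1 (k - 1), R l) * ((k : ℝ) - 1) * 2 ^ k
        < ‖a k‖ - ‖a (k - 1)‖ - R k - R (k - 1))
    {k : ℕ} (hk : 1 ≤ k) : ‖a k‖ - R k + R 1 ≤ ‖a (k + 1)‖ - R (k + 1) := by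
  have h := hsep (k + 1) (by omega)
  simp only [Nat.add_sub_cancel, Nat.cast_add, Nat.cast_one, add_sub_cancel_right] at h
  have hsum : R 1 ≤ ∑ l ∈ Finset.Icc 1 k, R l :=
    Finset.single_le_sum (fun l hl => (hR l (Finset.mem_Icc.1 hl).1).le)
      (Finset.mem_Icc.2 ⟨le_rfl, hk⟩)
  have hk' : (1 : ℝ) ≤ k := by exact_mod_cast hk
  have hpow : (1 : ℝ) ≤ 2 ^ (k + 1) := one_le_pow₀ one_le_two
  have hsum0 : 0 ≤ ∑ l ∈ Finset.Icc 1 k, R l := (hR 1 le_rfl).le.trans hsum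
  have hterm : R 1 * 1 * 1 ≤ (∑ l ∈ Finset.Icc 1 k, R l) * k * 2 ^ (k + 1) := by
    gcongr
  linarith [hR k hk]

theorem tendsto_norm_sub_radius (hR : ∀ k, 1 ≤ k → 0 < R k)
    (hsep : ∀ k : ℕ, 2 ≤ k →
      (∑ l ∈ Finset.Icc 1 (k - 1), R l) * ((k : ℝ) - 1) * 2 ^ k
        < ‖a k‖ - ‖a (k - 1)‖ - R k - R (k - 1)) :
    Tendsto (fun k => ‖a (k + 1)‖ - R (k + 1)) atTop atTop :=
  tendsto_atTop_of_add_le_succ (hR 1 le_rfl) fun k =>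
    norm_sub_radius_add_le_succ hR hsep (Nat.le_add_left 1 k)

end Separated

open Filter in
/-- if each `g k` is holomorphic and decaying outside the disc of radius
`R k` and the centers `a k` are separated, then the complement `Ω` of the union of the
closed discs `{|z - a k| ≤ R k}` is open, the series `H(z) = Σ_{k≥1} g_k(z - a_k)`
converges absolutely and locally uniformly on `Ω`, and `H` is holomorphic on `Ω`. -/
theorem stmt10 (g : ℕ → ℂ → ℂ) (R : ℕ → ℝ) (a : ℕ → ℂ)
    (hR : ∀ k, 1 ≤ k → 0 < R k)
    (hdecay : ∀ k, 1 ≤ k → ∀ z : ℂ, R k < ‖z‖ →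
      DifferentiableAt ℂ (g k) z ∧
        ‖g k z‖ ≤ (1 / 2) ^ k * R k / ‖z‖)
    (hsep : ∀ k : ℕ, 2 ≤ k →
      (∑ l ∈ Finset.Icc 1 (k - 1), R l) * ((k : ℝ) - 1) * 2 ^ k
        < ‖a k‖ - ‖a (k - 1)‖ - R k - R (k - 1)) :
    letI Ω : Set ℂ := {z : ℂ | ∀ k, 1 ≤ k → R k < ‖z - a k‖}
    letI H : ℂ → ℂ := fun z => ∑' k : ℕ, g (k + 1) (z - a (k + 1))
    IsOpen Ω ∧
    (∀ z ∈ Ω, Summable (fun k : ℕ => ‖g (k + 1) (z - a (k + 1))‖)) ∧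
    TendstoLocallyUniformlyOn
      (fun N : ℕ => fun z : ℂ => ∑ k ∈ Finset.range N, g (k + 1) (z - a (k + 1)))
      H atTop Ω ∧
    ∀ z ∈ Ω, DifferentiableAt ℂ H z := by
  set Ω : Set ℂ := {z : ℂ | ∀ k, 1 ≤ k → R k < ‖z - a k‖}
  have hΩ : Ω = {z : ℂ | ∀ k : ℕ, R (k + 1) < ‖z - a (k + 1)‖} := by
    ext z
    refine ⟨fun hz k => hz (k + 1) (Nat.le_add_left 1 k), fun hz k hk => ?_⟩
    obtain ⟨j, rfl⟩ := Nat.exists_eq_add_of_le' hk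
    exact hz j
  have hopen : IsOpen Ω := hΩ ▸ isOpen_setOf_forall_lt_norm_sub
    (Nat.cofinite_eq_atTop ▸ tendsto_norm_sub_radius hR hsep)
  have hle : ∀ k, ∀ z ∈ Ω, ‖g (k + 1) (z - a (k + 1))‖ ≤ (1 / 2) ^ (k + 1) := by
    intro k z hz
    have hzk := hz (k + 1) (Nat.le_add_left 1 k)
    exact le_of_le_mul_div (by positivity) (norm_nonneg _) hzk.le
      (hdecay (k + 1) (Nat.le_add_left 1 k) _ hzk).2
  have hgeo : Summable fun k : ℕ => (1 / 2 : ℝ) ^ (k + 1) :=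
    (summable_nat_add_iff 1).2 summable_geometric_two
  have hdiff : ∀ k, DifferentiableOn ℂ (fun z => g (k + 1) (z - a (k + 1))) Ω :=
    fun k z hz => ((hdecay (k + 1) (Nat.le_add_left 1 k) _
      (hz (k + 1) (Nat.le_add_left 1 k))).1.comp z
        (differentiableAt_id.sub_const _)).differentiableWithinAt
  refine ⟨hopen, fun z hz => hgeo.of_nonneg_of_le (fun _ => norm_nonneg _) (hle · z hz),
    (tendstoUniformlyOn_tsum_nat hgeo hle).tendstoLocallyUniformlyOn, fun z hz => ?_⟩
  exact (Complex.differentiableOn_tsum_of_summable_norm hgeo hdiff hopen hle).differentiableAt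
    (hopen.mem_nhds hz)
end
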